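/- Let S be a finite set, let F be the free group on S, and let M be an F-module (an abelian group with an F-action by automorphisms). Then the first group cohomology H¹(F, M) is isomorphic to the quotient (⊕_{s∈S} M)/D, where D = {(m − s·m)_{s∈S} : m ∈ M} is the image of the homomorphism M → ⊕_{s∈S} M sending m to the tuple with s-component m − s·m. -/

import Mathlib

/-!
Restricting a 1-cocycle on a free group `F(S)` to the generators is a bijection onto `S → M`:
injective because the cocycle identity `f (g h) = g • f h + f g` determines `f` from its values on
generators, surjective because for `v : S → M` the homomorphism `F(S) → M ⋊ F(S)`,
`s ↦ (v s, s)`, is a section of the projection whose `M`-component is a cocycle extending `v`.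
Under this bijection the coboundaries `g ↦ g • m - m` become the tuples `(m' - s • m')_s` with
`m' = -m`, so `H¹ = Z¹ / B¹` is the stated quotient.
-/

/-- The homomorphism `M → ⊕_{s ∈ S} M` sending `m` to the tuple `(m - s • m)_{s ∈ S}`,
whose image is the subgroup `D` of "principal relations". -/
noncomputable def statement6Map (S : Type) (M : Type) [AddCommGroup M] [Module ℤ M]
    (ρ : Representation ℤ (FreeGroup S) M) : M →+ (S → M) :=
  AddMonoidHom.mk' (fun m s => m - ρ (FreeGroup.of s) m) (by
    intro a b
    funext s
    show (a + b) - ρ (FreeGroup.of s) (a + b) =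
      (a - ρ (FreeGroup.of s) a) + (b - ρ (FreeGroup.of s) b)
    rw [map_add]
    abel)

namespace Representation

variable {k G V : Type*} [CommSemiring k] [Group G] [AddCommMonoid V] [Module k V]

def toMulAutMultiplicative (ρ : Representation k G V) : G →* MulAut (Multiplicative V) where
  toFun g :=
    { toFun x := .ofAdd (ρ g x.toAdd)
      invFun x := .ofAdd (ρ g⁻¹ x.toAdd)
      left_inv x := by simp
      right_inv x := by simp
      map_mul' x y := by simp }
  map_one' := by ext; simp
  map_mul' g h := by ext; simp

end Representation

namespace groupCohomology

open FreeGroup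

universe u

variable {k S : Type u} [CommRing k] {A : Rep k (FreeGroup S)}

theorem cocycles₁_freeGroup_ext {f₁ f₂ : cocycles₁ A} (h : ∀ s, f₁ (of s) = f₂ (of s)) :
    f₁ = f₂ := by
  ext g
  induction g with
  | C1 => simp
  | of s => exact h s
  | inv_of s _ =>
    rw [← A.ρ.inv_self_apply (of s) (f₁ _), cocycles₁_map_inv, h,
      ← cocycles₁_map_inv, A.ρ.inv_self_apply]
  | mul g g' hg hg' =>
    calc f₁ (g * g') = A.ρ g (f₁ g') + f₁ g := (mem_cocycles₁_iff _).1 f₁.2 g g'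
      _ = A.ρ g (f₂ g') + f₂ g := by rw [hg, hg']
      _ = f₂ (g * g') := ((mem_cocycles₁_iff _).1 f₂.2 g g').symm

theorem exists_cocycles₁_freeGroup_apply_of (v : S → A) :
    ∃ f : cocycles₁ A, ∀ s, f (of s) = v s := by
  let L : FreeGroup S →* Multiplicative A ⋊[A.ρ.toMulAutMultiplicative] FreeGroup S :=
    lift fun s => ⟨.ofAdd (v s), of s⟩
  have hL : SemidirectProduct.rightHom.comp L = MonoidHom.id _ := by
    ext s; simp [L]
  have hright (g) : (L g).right = g := DFunLike.congr_fun hL g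
  refine ⟨⟨fun g => (L g).left.toAdd, (mem_cocycles₁_iff _).2 fun g h => ?_⟩, fun s => by simp [L]⟩
  rw [L.map_mul, SemidirectProduct.mul_left, hright]
  exact add_comm _ _

variable (A) in
noncomputable def cocycles₁FreeGroupEquiv : cocycles₁ A ≃ₗ[k] (S → A) :=
  LinearEquiv.ofBijective
    { toFun f s := f (of s)
      map_add' _ _ := rfl
      map_smul' _ _ := rfl }
    ⟨fun _ _ h => cocycles₁_freeGroup_ext (congrFun h),
      fun v => (exists_cocycles₁_freeGroup_apply_of v).imp fun _ hf => funext hf⟩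

@[simp]
theorem cocycles₁FreeGroupEquiv_symm_apply_of (v : S → A) (s : S) :
    (cocycles₁FreeGroupEquiv A).symm v (of s) = v s :=
  congrFun ((cocycles₁FreeGroupEquiv A).apply_symm_apply v) s

theorem mem_coboundaries₁_freeGroup_iff (f : cocycles₁ A) :
    ⇑f ∈ coboundaries₁ A ↔ ∃ m : A, ∀ s, A.ρ (of s) m - m = f (of s) := by
  constructor
  · rintro ⟨m, hm⟩
    exact ⟨m, fun s => congrFun hm (of s)⟩
  · rintro ⟨m, hm⟩
    have : (⟨_, d₀₁_apply_mem_cocycles₁ m⟩ : cocycles₁ A) = f := cocycles₁_freeGroup_ext hm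
    exact ⟨m, congrArg Subtype.val this⟩

end groupCohomology

open groupCohomology in
theorem statement6_general (S : Type) (M : Type) [AddCommGroup M] [Module ℤ M]
    (ρ : Representation ℤ (FreeGroup S) M) :
    Nonempty ((groupCohomology (Rep.of ρ) 1) ≃+
      ((S → M) ⧸ (statement6Map S M ρ).range)) := by
  let π : (S → M) →+ H1 (Rep.of ρ) :=
    (H1π _).hom.toAddMonoidHom.comp (cocycles₁FreeGroupEquiv (Rep.of ρ)).symm.toAddMonoidHom
  have hπ : Function.Surjective π :=
    ((ModuleCat.epi_iff_surjective (H1π _)).1 inferInstance).comp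
      (cocycles₁FreeGroupEquiv _).symm.surjective
  have hker : π.ker = (statement6Map S M ρ).range := by
    ext v
    rw [AddMonoidHom.mem_ker, AddMonoidHom.mem_range]
    refine (H1π_eq_zero_iff _).trans <| (mem_coboundaries₁_freeGroup_iff _).trans ?_
    refine (Equiv.neg M).exists_congr fun m => ?_
    simp [statement6Map, funext_iff, neg_add_eq_sub]
  exact ⟨(QuotientAddGroup.quotientKerEquivOfSurjective π hπ).symm.trans
    (QuotientAddGroup.quotientAddEquivOfEq hker)⟩

/-- Let `F` be the free group on a finite set `S` and `M` an `F`-module.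
Then `H¹(F, M)` is isomorphic to `(⊕_{s ∈ S} M) ⧸ D`, where
`D = {(m - s • m)_{s ∈ S} : m ∈ M}`. -/
theorem statement6 (S : Type) [Finite S] (M : Type) [AddCommGroup M] [Module ℤ M]
    (ρ : Representation ℤ (FreeGroup S) M) :
    Nonempty ((groupCohomology (Rep.of ρ) 1) ≃+
      ((S → M) ⧸ (statement6Map S M ρ).range)) :=
  statement6_general S M ρ
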